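/- arXiv:1807.01558 — 2 statements merged into one kernel-verified Lean document; each statement's English description precedes it below -/
import Mathlib

section
/- Let a_{11} ∈ ℂ and consider the operator L = ∂³ + x²∂² + a_{11}x∂ on ℂ[x], with eigenvalue λ(n) = n(n−1) + a_{11}n. Suppose {P_n} are monic eigenpolynomials L P_n = λ(n)P_n with expansion P_n(x) = x^n + Σ_{k≥1} p_k(n)x^{n−k}, and assume 2n + a_{11} − k − 1 ≠ 0 wherever needed so the coefficients are determined. Then p_k(n) = 0 whenever k is not divisible by 3, and p_3(n) = n(n−1)(n−2)/(6n + 3a_{11} − 12) whenever 6n + 3a_{11} − 12 ≠ 0. -/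
/-!
Comparing coefficients of `x^m` in `L P = λ(n) P` gives the three-step recursion
`(λ(n) - λ(m)) p_m = (m+1)(m+2)(m+3) p_{m+3}`, and `λ(n) - λ(n-k) = k (2n + a₁₁ - k - 1)`.
Starting from the vanishing coefficients above the leading one, the recursion descends in steps
of three, so only the coefficients `p_{n-3j}` can be nonzero; `k = 3` with `p_n = 1` gives `p_3`.
-/

open Polynomial

section Recursion

variable {R : Type*} [CommRing R]

/-- The paper's `λ(m)`: `∂³ + x²∂² + a x∂` maps `x^m` to `λ(m) x^m` plus a multiple of `x^(m-3)`. -/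
def eigenvalue (a : R) (m : R) : R := m * (m - 1) + a * m

lemma coeff_operator (a : R) (P : R[X]) (m : ℕ) :
    (derivative (derivative (derivative P)) + X ^ 2 * derivative (derivative P)
        + C a * (X * derivative P)).coeff m
      = ((m : R) + 1) * ((m : R) + 2) * ((m : R) + 3) * P.coeff (m + 3)
        + eigenvalue a (m : R) * P.coeff m := by
  rw [show (X : R[X]) ^ 2 * derivative (derivative P) = derivative (derivative P) * X ^ 2 by ring,
    show C a * (X * derivative P) = derivative P * X ^ 1 * C a by ring]
  simp only [coeff_add, coeff_derivative, coeff_mul_X_pow', coeff_mul_C, eigenvalue]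
  rcases m with _ | _ | m <;> simp <;> ring

lemma eigenvalue_sub_eigenvalue_sub (a n k : R) :
    eigenvalue a n - eigenvalue a (n - k) = k * (2 * n + a - k - 1) := by
  unfold eigenvalue; ring

variable {a : R} {n : ℕ} {P : R[X]}

lemma coeff_sub_recursion
    (hL : derivative (derivative (derivative P)) + X ^ 2 * derivative (derivative P)
        + C a * (X * derivative P) = eigenvalue a (n : R) • P)
    {k : ℕ} (hkn : k ≤ n) :
    (k : R) * (2 * (n : R) + a - k - 1) * P.coeff (n - k)
      = ((n : R) - k + 1) * ((n : R) - k + 2) * ((n : R) - k + 3) * P.coeff (n - k + 3) := by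
  have h := congrArg (coeff · (n - k)) hL
  simp only [coeff_operator, coeff_smul, smul_eq_mul, Nat.cast_sub hkn] at h
  rw [← eigenvalue_sub_eigenvalue_sub]
  linear_combination -h

lemma coeff_sub_eq_zero_of_not_three_dvd [IsDomain R] [CharZero R]
    (hdeg : P.natDegree ≤ n)
    (hL : derivative (derivative (derivative P)) + X ^ 2 * derivative (derivative P)
        + C a * (X * derivative P) = eigenvalue a (n : R) • P)
    (hreg : ∀ k : ℕ, 1 ≤ k → k ≤ n → 2 * (n : R) + a - k - 1 ≠ 0) :
    ∀ k : ℕ, k ≤ n → ¬3 ∣ k → P.coeff (n - k) = 0 := by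
  intro k
  induction k using Nat.strong_induction_on with
  | _ k ih =>
    intro hkn h3
    have hk : (k : R) * (2 * (n : R) + a - k - 1) ≠ 0 :=
      mul_ne_zero (Nat.cast_ne_zero.mpr (by omega)) (hreg k (by omega) hkn)
    have hnext : P.coeff (n - k + 3) = 0 := by
      rcases Nat.lt_or_ge k 3 with hk3 | hk3
      · exact coeff_eq_zero_of_natDegree_lt (by omega)
      · rw [show n - k + 3 = n - (k - 3) by omega]
        exact ih (k - 3) (by omega) (by omega) (by omega)
    have h := coeff_sub_recursion hL hkn
    rw [hnext, mul_zero] at h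
    exact (mul_eq_zero.mp h).resolve_left hk

end Recursion

lemma coeff_sub_three {K : Type*} [Field K] {a : K} {n : ℕ} {P : K[X]}
    (hm : P.Monic) (hdeg : P.natDegree = n)
    (hL : derivative (derivative (derivative P)) + X ^ 2 * derivative (derivative P)
        + C a * (X * derivative P) = eigenvalue a (n : K) • P)
    (h3n : 3 ≤ n) (hden : 6 * (n : K) + 3 * a - 12 ≠ 0) :
    P.coeff (n - 3) = (n : K) * ((n : K) - 1) * ((n : K) - 2) / (6 * (n : K) + 3 * a - 12) := by
  have h := coeff_sub_recursion hL h3n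
  rw [show n - 3 + 3 = n by omega, ← hdeg, hm.coeff_natDegree, hdeg] at h
  rw [eq_div_iff hden]
  push_cast at h
  linear_combination h

theorem stmt_15 (a11 : ℂ) (n : ℕ) (P : ℂ[X]) (hm : P.Monic) (hdeg : P.natDegree = n)
    (hL : derivative (derivative (derivative P)) + X ^ 2 * derivative (derivative P)
        + C a11 * (X * derivative P)
      = ((n : ℂ) * ((n : ℂ) - 1) + a11 * (n : ℂ)) • P)
    (hreg : ∀ k : ℕ, 1 ≤ k → k ≤ n → 2 * (n : ℂ) + a11 - (k : ℂ) - 1 ≠ 0) :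
    (∀ k : ℕ, k ≤ n → ¬(3 ∣ k) → P.coeff (n - k) = 0) ∧
    (3 ≤ n → 6 * (n : ℂ) + 3 * a11 - 12 ≠ 0 →
      P.coeff (n - 3)
        = (n : ℂ) * ((n : ℂ) - 1) * ((n : ℂ) - 2) / (6 * (n : ℂ) + 3 * a11 - 12)) :=
  ⟨coeff_sub_eq_zero_of_not_three_dvd hdeg.le hL hreg,
    coeff_sub_three hm hdeg hL⟩
end

section
/- A sequence {P_n} of monic real polynomials satisfying the three-term recurrence x·P_n(x) = P_{n+1}(x) + u(n)P_n(x) + v(n)P_{n−1}(x) with real coefficients and v(n) > 0 for all n ≥ 1 (and P_{−1} = 0, P_0 = 1) consists entirely of real-rooted polynomials. -/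
/-!
`P n` is the characteristic polynomial of the `n × n` Jacobi matrix with diagonal `u 0, …, u (n-1)`
and off-diagonal entries `√(v 1), …, √(v (n-1))`: expanding that determinant along its last row
gives back the three-term recurrence, because `v > 0` makes `√(v k) ^ 2 = v k`. The Jacobi matrix is
real symmetric, so its characteristic polynomial splits over `ℝ`.
-/

open Polynomial

namespace Matrix

variable {R : Type*} [CommRing R]

theorem det_succ_of_lastCol_eq_zero {m : ℕ} (A : Matrix (Fin (m + 1)) (Fin (m + 1)) R)
    (h : ∀ i : Fin m, A i.castSucc (Fin.last m) = 0) :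
    A.det = A (Fin.last m) (Fin.last m) * (A.submatrix Fin.castSucc Fin.castSucc).det := by
  rw [det_succ_column A (Fin.last m), Fin.sum_univ_castSucc]
  simp [h, Fin.succAbove_last, ← two_mul, pow_mul]

theorem charmatrix_submatrix {m n : Type*} [Fintype m] [DecidableEq m] [Fintype n] [DecidableEq n]
    (A : Matrix n n R) {e : m → n} (he : Function.Injective e) :
    (charmatrix A).submatrix e e = charmatrix (A.submatrix e e) := by
  ext i j
  by_cases hij : i = j
  · simp [hij]
  · simp [charmatrix_apply_ne _ _ _ hij, charmatrix_apply_ne _ _ _ (he.ne hij)]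

theorem det_succ_succ_of_tridiagonal_last {n : ℕ} (M : Matrix (Fin (n + 2)) (Fin (n + 2)) R)
    (hrow : ∀ j : Fin n, M (Fin.last _) j.castSucc.castSucc = 0)
    (hcol : ∀ i : Fin n, M i.castSucc.castSucc (Fin.last _) = 0) :
    M.det = M (Fin.last _) (Fin.last _) * (M.submatrix Fin.castSucc Fin.castSucc).det
      - M (Fin.last _) (Fin.last n).castSucc * M (Fin.last n).castSucc (Fin.last _) *
        (M.submatrix (Fin.castSucc ∘ Fin.castSucc) (Fin.castSucc ∘ Fin.castSucc)).det := by
  have hminor : (M.submatrix Fin.castSucc (Fin.last n).castSucc.succAbove).det =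
      M (Fin.last n).castSucc (Fin.last _) *
        (M.submatrix (Fin.castSucc ∘ Fin.castSucc) (Fin.castSucc ∘ Fin.castSucc)).det := by
    rw [det_succ_of_lastCol_eq_zero _ (by simpa [Fin.succAbove_castSucc_self] using hcol)]
    simp only [submatrix_apply, Fin.succAbove_castSucc_self, Fin.succ_last, submatrix_submatrix]
    congr 3
    funext j
    exact Fin.succAbove_castSucc_of_lt _ _ (Fin.castSucc_lt_last j)
  rw [det_succ_row M (Fin.last _), Fin.sum_univ_castSucc, Fin.sum_univ_castSucc]
  simp only [hrow, Fin.succAbove_last, hminor]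
  simp [pow_add, ← mul_pow]
  ring

end Matrix

section Jacobi

variable {R : Type*}

/-- `b k` sits at `(k - 1, k)` and `(k, k - 1)`, so `b 0` does not occur. -/
def jacobiMatrix [Zero R] (a b : ℕ → R) (n : ℕ) : Matrix (Fin n) (Fin n) R :=
  Matrix.of fun i j =>
    if (i : ℕ) = j then a i
    else if (i : ℕ) + 1 = j then b j
    else if (j : ℕ) + 1 = i then b i
    else 0

theorem jacobiMatrix_isSymm [Zero R] (a b : ℕ → R) (n : ℕ) : (jacobiMatrix a b n).IsSymm := by
  ext i j
  simp only [Matrix.transpose_apply, jacobiMatrix, Matrix.of_apply]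
  split_ifs <;> first | rfl | (congr 1 <;> omega)

theorem jacobiMatrix_submatrix_castSucc [Zero R] (a b : ℕ → R) (n : ℕ) :
    (jacobiMatrix a b (n + 1)).submatrix Fin.castSucc Fin.castSucc = jacobiMatrix a b n := by
  ext i j
  simp [jacobiMatrix]

theorem jacobiMatrix_apply_eq_zero [Zero R] {a b : ℕ → R} {n : ℕ} {i j : Fin n}
    (h : (i : ℕ) + 1 < j ∨ (j : ℕ) + 1 < i) : jacobiMatrix a b n i j = 0 := by
  simp only [jacobiMatrix, Matrix.of_apply]
  rw [if_neg (by omega), if_neg (by omega), if_neg (by omega)]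

variable [CommRing R]

theorem charpoly_jacobiMatrix_zero (a b : ℕ → R) : (jacobiMatrix a b 0).charpoly = 1 :=
  Matrix.charpoly_isEmpty

theorem charpoly_jacobiMatrix_one (a b : ℕ → R) :
    (jacobiMatrix a b 1).charpoly = X - C (a 0) := by
  simp [Matrix.charpoly, jacobiMatrix]

theorem charpoly_jacobiMatrix_succ_succ (a b : ℕ → R) (n : ℕ) :
    (jacobiMatrix a b (n + 2)).charpoly =
      (X - C (a (n + 1))) * (jacobiMatrix a b (n + 1)).charpoly
        - C (b (n + 1) ^ 2) * (jacobiMatrix a b n).charpoly := by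
  have hsub (m : ℕ) : (Matrix.charmatrix (jacobiMatrix a b (m + 1))).submatrix
      Fin.castSucc Fin.castSucc = Matrix.charmatrix (jacobiMatrix a b m) := by
    rw [Matrix.charmatrix_submatrix _ (Fin.castSucc_injective m), jacobiMatrix_submatrix_castSucc]
  have hlo : Matrix.charmatrix (jacobiMatrix a b (n + 2)) (Fin.last _) (Fin.last n).castSucc =
      -C (b (n + 1)) := by
    rw [Matrix.charmatrix_apply_ne _ _ _ (Fin.castSucc_lt_last _).ne']
    simp [jacobiMatrix, show n + 1 + 1 ≠ n by omega]
  have hup : Matrix.charmatrix (jacobiMatrix a b (n + 2)) (Fin.last n).castSucc (Fin.last _) =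
      -C (b (n + 1)) := by
    rw [Matrix.charmatrix_apply_ne _ _ _ (Fin.castSucc_lt_last _).ne]
    simp [jacobiMatrix]
  rw [Matrix.charpoly, Matrix.det_succ_succ_of_tridiagonal_last, ← Matrix.submatrix_submatrix,
    hsub, hsub, hlo, hup, Matrix.charmatrix_apply_eq]
  · simp [jacobiMatrix, Matrix.charpoly]
    ring
  all_goals
    intro j
    rw [Matrix.charmatrix_apply_ne _ _ _ (by simp [Fin.ext_iff]; omega),
      jacobiMatrix_apply_eq_zero (by simp), map_zero, neg_zero]

theorem eq_charpoly_jacobiMatrix_of_recurrence (a b : ℕ → R) (P : ℕ → R[X]) (h0 : P 0 = 1)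
    (h1 : P 1 = X - C (a 0))
    (hrec : ∀ n, P (n + 2) = (X - C (a (n + 1))) * P (n + 1) - C (b (n + 1) ^ 2) * P n) (n : ℕ) :
    P n = (jacobiMatrix a b n).charpoly := by
  induction n using Nat.twoStepInduction with
  | zero => rw [h0, charpoly_jacobiMatrix_zero]
  | one => rw [h1, charpoly_jacobiMatrix_one]
  | more n ih₀ ih₁ => rw [hrec, charpoly_jacobiMatrix_succ_succ, ih₀, ih₁]

end Jacobi

theorem stmt_18 (u v : ℕ → ℝ) (hv : ∀ n : ℕ, 1 ≤ n → 0 < v n)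
    (P : ℕ → Polynomial ℝ) (h0 : P 0 = 1)
    (hrec0 : X * P 0 = P 1 + C (u 0) * P 0)
    (hrec : ∀ n : ℕ,
      X * P (n + 1) = P (n + 2) + C (u (n + 1)) * P (n + 1) + C (v (n + 1)) * P n) :
    ∀ n : ℕ, (P n).Splits := by
  have hP1 : P 1 = X - C (u 0) := by
    rw [h0] at hrec0
    linear_combination -hrec0
  have hPrec (n : ℕ) : P (n + 2) =
      (X - C (u (n + 1))) * P (n + 1) - C (√(v (n + 1)) ^ 2) * P n := by
    rw [Real.sq_sqrt (hv (n + 1) n.succ_pos).le]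
    linear_combination -hrec n
  intro n
  rw [eq_charpoly_jacobiMatrix_of_recurrence u (fun k => √(v k)) P h0 hP1 hPrec n]
  exact (Matrix.isHermitian_iff_isSymm.mpr (jacobiMatrix_isSymm _ _ n)).splits_charpoly
end
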